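/- The diversifying choice function is monotone with respect to revealed preference: for all z, z' : S → ℝ≥0 with z ≤ z' pointwise, one has C(z') ⪰ C(z) (i.e. C(C(z') ∨ C(z)) = C(z')) and H(C(z')) ⊇ H(C(z)). -/

import Mathlib

/-!
The choice `w = C(z)` truncates `z` at its own maximum, `w e = min (max w) (z e)`, and any
`y` squeezed between `w` and `z` has the same choice `w`. Since `C(z) ≤ z ≤ z'`, the join
`C(z') ⊔ C(z)` lies between `C(z')` and `z'`, which gives revealed preference. For the heads,
`|C(z)| = min |z| q` is monotone, so `C(z')` is fully filling with `C(z)`. Compare the maxima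
`M` of `C(z)` and `M'` of `C(z')`: if `M' ≤ M`, the truncation formula puts every head element
of `C(z)` at height `M'` in `C(z')`; if `M < M'`, it gives `C(z) ≤ C(z')`, and equal sums force
`C(z) = C(z')`.
-/

open scoped NNReal

/-- `IsDivChoice q z w` asserts that `w = C(z)`, where `C` is the diversifying choice
function with quota `q` on coordinates indexed by the finite set `S`:
if `|z| = ∑ e, z e ≤ q` then `C(z) = z`, and otherwise `C(z) e = min r (z e)` for all `e`,
where `r ≥ 0` is the (unique) cutting height satisfying `∑ e, min r (z e) = q`. -/
def IsDivChoice {S : Type*} [Fintype S] (q : ℝ≥0) (z w : S → ℝ≥0) : Prop :=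
  ((∑ e, z e) ≤ q ∧ w = z) ∨
    (q < ∑ e, z e ∧ ∃ r : ℝ≥0, (∑ e, min r (z e)) = q ∧ w = fun e => min r (z e))

/-- The head `H(z)` of a rational vector `z`: if `z` is fully filling (`∑ e, z e = q`)
it is the set of coordinates where `z` attains its maximum, and otherwise it is `∅`. -/
def divHead {S : Type*} [Fintype S] (q : ℝ≥0) (z : S → ℝ≥0) : Set S :=
  {e | (∑ e', z e') = q ∧ z e = Finset.univ.sup z}

/-- The tail `T(z)` is the complement of the head. -/
def divTail {S : Type*} [Fintype S] (q : ℝ≥0) (z : S → ℝ≥0) : Set S :=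
  {e | e ∉ divHead q z}

theorem Fintype.eq_of_le_of_sum_le {ι M : Type*} [Fintype ι] [AddCommMonoid M] [PartialOrder M]
    [IsOrderedCancelAddMonoid M] {f g : ι → M} (hfg : f ≤ g) (h : ∑ i, g i ≤ ∑ i, f i) :
    f = g :=
  hfg.eq_of_not_lt fun hlt => (Fintype.sum_strictMono hlt).not_ge h

namespace IsDivChoice

variable {S : Type*} [Fintype S] {q : ℝ≥0} {z w y : S → ℝ≥0}

theorem le (hw : IsDivChoice q z w) : w ≤ z := by
  rcases hw with ⟨_, rfl⟩ | ⟨_, r, _, rfl⟩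
  · exact le_rfl
  · exact fun e => min_le_right r (z e)

theorem sum_eq_min (hw : IsDivChoice q z w) : ∑ e, w e = min (∑ e, z e) q := by
  rcases hw with ⟨hz, rfl⟩ | ⟨hz, r, hr, rfl⟩
  · exact (min_eq_left hz).symm
  · rw [hr, min_eq_right hz.le]

theorem sum_le (hw : IsDivChoice q z w) : ∑ e, w e ≤ q :=
  hw.sum_eq_min ▸ min_le_right _ _

theorem apply_eq_min_sup (hw : IsDivChoice q z w) (e : S) :
    w e = min (Finset.univ.sup w) (z e) := by
  rcases hw with ⟨_, rfl⟩ | ⟨_, r, _, rfl⟩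
  · exact (min_eq_right (Finset.le_sup (Finset.mem_univ e))).symm
  · have hsup : Finset.univ.sup (fun e => min r (z e)) ≤ r :=
      Finset.sup_le fun _ _ => min_le_left _ _
    exact le_antisymm (le_min (Finset.le_sup (f := fun e => min r (z e)) (Finset.mem_univ e))
      (min_le_right _ _)) (min_le_min_right _ hsup)

theorem of_le_of_le (hw : IsDivChoice q z w) (hwy : w ≤ y) (hyz : y ≤ z) :
    IsDivChoice q y w := by
  rcases hw with ⟨hz, rfl⟩ | ⟨_, r, hr, rfl⟩
  · exact Or.inl ⟨le_antisymm hyz hwy ▸ hz, le_antisymm hwy hyz⟩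
  · have hcut : ∀ e, min r (y e) = min r (z e) := fun e =>
      le_antisymm (min_le_min_left r (hyz e)) (le_min (min_le_left _ _) (hwy e))
    by_cases hy : ∑ e, y e ≤ q
    · exact Or.inl ⟨hy, Fintype.eq_of_le_of_sum_le hwy (hy.trans hr.ge)⟩
    · refine Or.inr ⟨lt_of_not_ge hy, r, ?_, funext fun e => (hcut e).symm⟩
      simpa only [hcut] using hr

end IsDivChoice

section Monotone

variable {S : Type*} [Fintype S] {q : ℝ≥0} {z z' cz cz' : S → ℝ≥0}

theorem IsDivChoice.sup_of_le (hz : IsDivChoice q z cz) (hz' : IsDivChoice q z' cz')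
    (h : z ≤ z') : IsDivChoice q (cz' ⊔ cz) cz' :=
  hz'.of_le_of_le le_sup_left (sup_le hz'.le (hz.le.trans h))

theorem divHead_subset_of_le (hz : IsDivChoice q z cz) (hz' : IsDivChoice q z' cz')
    (h : z ≤ z') : divHead q cz ⊆ divHead q cz' := by
  rintro e ⟨hfull, hmax⟩
  set M := Finset.univ.sup cz
  set M' := Finset.univ.sup cz'
  have hfull' : ∑ e, cz' e = q := by
    refine le_antisymm hz'.sum_le ?_
    rw [← hfull, hz.sum_eq_min, hz'.sum_eq_min]
    exact min_le_min_right q (Fintype.sum_mono h)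
  refine ⟨hfull', ?_⟩
  have hMe : M ≤ z' e := hmax ▸ (hz.le e).trans (h e)
  rcases le_or_gt M' M with hM | hM
  · rw [hz'.apply_eq_min_sup e]
    exact min_eq_left (hM.trans hMe)
  · have hle : cz ≤ cz' := fun f => by
      rw [hz.apply_eq_min_sup f, hz'.apply_eq_min_sup f]
      exact min_le_min hM.le (h f)
    have heq : cz = cz' := Fintype.eq_of_le_of_sum_le hle (hfull' ▸ hfull.ge)
    exact heq ▸ hmax

end Monotone

/-- The diversifying choice function is monotone with respect to
revealed preference: if `z ≤ z'` pointwise, then `C(z') ⪰ C(z)`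
(i.e. `C(C(z') ∨ C(z)) = C(z')`) and `H(C(z')) ⊇ H(C(z))`. -/
theorem divChoice_monotone {S : Type*} [Fintype S] (q : ℝ≥0) (z z' cz cz' : S → ℝ≥0)
    (h : ∀ e, z e ≤ z' e) (hz : IsDivChoice q z cz) (hz' : IsDivChoice q z' cz') :
    IsDivChoice q (fun e => max (cz' e) (cz e)) cz' ∧ divHead q cz ⊆ divHead q cz' :=
  ⟨hz.sup_of_le hz' h, divHead_subset_of_le hz hz' h⟩
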